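/- arXiv:1411.5958 — 8 statements merged into one kernel-verified Lean document; each statement's English description precedes it below -/
import Mathlib

section
/- Let P be a finite multiset of vectors in a finite-dimensional vector space and q ≥ 0. If P is q-stable (its linear span is unchanged after removing any at most q vectors, counted with multiplicity) and P contains at least one nonzero vector, then the number of nonzero vectors in P (with multiplicity) is at least dim(span P) + q. -/
open scoped Classical

/-- The linear span of (the set of elements of) a multiset of vectors. -/
def mSpan (F : Type*) {V : Type*} [Field F] [AddCommGroup V] [Module F V]
    (P : Multiset V) : Submodule F V :=
  Submodule.span F {x | x ∈ P}

/-- A finite multiset `P` of vectors is `q`-stable if its linear span is unchanged after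
removing any at most `q` vectors (counted with multiplicity). -/
def QStable (F : Type*) {V : Type*} [Field F] [AddCommGroup V] [Module F V]
    (q : ℕ) (P : Multiset V) : Prop :=
  ∀ S : Multiset V, S ≤ P → Multiset.card S ≤ q → mSpan F (P - S) = mSpan F P

/-- The number of nonzero vectors of a multiset, with multiplicity. -/
noncomputable def nnz {V : Type*} [Zero V] (P : Multiset V) : ℕ :=
  Multiset.card (Multiset.filter (fun v => v ≠ 0) P)

/-!
Removing one nonzero vector from a `(q+1)`-stable multiset leaves a `q`-stable multiset with
the same span, one nonzero vector fewer, and (since the span is still nonzero) still some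
nonzero vector. Induction on `q` thus reduces to `q = 0`, where `dim (span P) ≤ nnz P` because
the nonzero vectors of `P` already span it.
-/

section

variable {F V : Type*} [Field F] [AddCommGroup V] [Module F V]

lemma mSpan_filter_ne_zero (P : Multiset V) :
    mSpan F (P.filter (· ≠ 0)) = mSpan F P := by
  refine le_antisymm (Submodule.span_mono fun x hx => (Multiset.mem_filter.mp hx).1) ?_
  refine Submodule.span_le.mpr fun x hx => ?_
  by_cases hx0 : x = 0
  · simp [hx0]
  · exact Submodule.subset_span (Multiset.mem_filter.mpr ⟨hx, hx0⟩)

lemma mSpan_eq_bot_iff (P : Multiset V) : mSpan F P = ⊥ ↔ ∀ v ∈ P, v = 0 :=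
  Submodule.span_eq_bot

lemma finrank_mSpan_le_card (P : Multiset V) :
    Module.finrank F (mSpan F P) ≤ Multiset.card P := by
  have hset : ({x | x ∈ P} : Set V) = ↑P.toFinset := by ext x; simp
  calc Module.finrank F (mSpan F P) ≤ P.toFinset.card := by
        rw [mSpan, hset]; exact finrank_span_finset_le_card P.toFinset
    _ ≤ Multiset.card P := Multiset.toFinset_card_le P

lemma finrank_mSpan_le_nnz (P : Multiset V) : Module.finrank F (mSpan F P) ≤ nnz P := by
  rw [← mSpan_filter_ne_zero]
  exact finrank_mSpan_le_card _

lemma nnz_sub_singleton_add_one {P : Multiset V} {v : V} (hvP : v ∈ P) (hv0 : v ≠ 0) :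
    nnz (P - {v}) + 1 = nnz P := by
  have hvf : v ∈ P.filter (· ≠ 0) := Multiset.mem_filter.mpr ⟨hvP, hv0⟩
  rw [nnz, Multiset.filter_sub, Multiset.filter_singleton, if_pos hv0,
    Multiset.card_sub (Multiset.singleton_le.mpr hvf), Multiset.card_singleton, nnz]
  have := Multiset.card_pos_iff_exists_mem.mpr ⟨v, hvf⟩
  omega

namespace QStable

lemma mSpan_sub_singleton {q : ℕ} {P : Multiset V} (hP : QStable F (q + 1) P) {v : V}
    (hvP : v ∈ P) : mSpan F (P - {v}) = mSpan F P :=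
  hP {v} (Multiset.singleton_le.mpr hvP) (by simp)

lemma sub_singleton {q : ℕ} {P : Multiset V} (hP : QStable F (q + 1) P) {v : V}
    (hvP : v ∈ P) : QStable F q (P - {v}) := by
  intro S hS hcard
  have hvS : {v} + S ≤ P := (le_tsub_iff_left (Multiset.singleton_le.mpr hvP)).mp hS
  rw [← tsub_add_eq_tsub_tsub, hP _ hvS (by rw [Multiset.card_add, Multiset.card_singleton]; omega), hP.mSpan_sub_singleton hvP]

end QStable

end

theorem stmt_0_general {F V : Type*} [Field F] [AddCommGroup V] [Module F V]
    (q : ℕ) (P : Multiset V) (hP : QStable F q P) (hnt : ∃ v ∈ P, v ≠ 0) :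
    Module.finrank F (mSpan F P) + q ≤ nnz P := by
  induction q generalizing P with
  | zero => exact finrank_mSpan_le_nnz P
  | succ q ih =>
    obtain ⟨v, hvP, hv0⟩ := hnt
    have hspan := hP.mSpan_sub_singleton hvP
    have hnt' : ∃ w ∈ P - {v}, w ≠ 0 := by
      by_contra! hzero
      have hv : v ∈ mSpan F (P - {v}) := hspan ▸ Submodule.subset_span hvP
      rw [(mSpan_eq_bot_iff _).mpr hzero, Submodule.mem_bot] at hv
      exact hv0 hv
    have := ih (P - {v}) (hP.sub_singleton hvP) hnt'
    rw [hspan] at this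
    have := nnz_sub_singleton_add_one hvP hv0
    omega

/-- If `P` is `q`-stable and contains at least one nonzero vector, then the number of
nonzero vectors of `P` (with multiplicity) is at least `dim (span P) + q`. -/
theorem stmt_0 {F V : Type*} [Field F] [AddCommGroup V] [Module F V] [FiniteDimensional F V]
    (q : ℕ) (P : Multiset V) (hP : QStable F q P) (hnt : ∃ v ∈ P, v ≠ 0) :
    Module.finrank F (mSpan F P) + q ≤ nnz P :=
  stmt_0_general q P hP hnt
end

section
/- Let P be a q-stable finite multiset of vectors in a finite-dimensional vector space with at most dim(span P) + q nonzero vectors (with multiplicity). Then any collection of at most dim(span P) nonzero vectors of P is linearly independent. -/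
open scoped Classical

/-
Extend the given nonzero vectors `S` to a submultiset `T` of the nonzero vectors of `P` with
exactly `n = dim (span P)` elements. At most `q` nonzero vectors of `P` lie outside `T`, so by
`q`-stability `T` alone still spans `span P`. Thus `n` vectors span an `n`-dimensional space,
so they are independent, and so is their submultiset `S`.
-/

theorem Multiset.exists_le_le_card_eq {α : Type*} {S T : Multiset α} {k : ℕ} (hST : S ≤ T)
    (hSk : card S ≤ k) (hkT : k ≤ card T) : ∃ U, S ≤ U ∧ U ≤ T ∧ card U = k := by
  have hpos : 0 < card (powersetCard (k - card S) (T - S)) := by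
    rw [card_powersetCard, card_sub hST]
    exact Nat.choose_pos (by omega)
  obtain ⟨X, hX⟩ := card_pos_iff_exists_mem.mp hpos
  rw [mem_powersetCard] at hX
  refine ⟨S + X, le_add_right S X, ?_, by rw [card_add, hX.2]; omega⟩
  rw [add_comm]
  exact (le_tsub_iff_right hST).mp hX.1

section mSpan

variable {F V : Type*} [Field F] [AddCommGroup V] [Module F V]

instance (P : Multiset V) : FiniteDimensional F (mSpan F P) :=
  FiniteDimensional.span_of_finite F P.finite_toSet

lemma mSpan_add (A B : Multiset V) : mSpan F (A + B) = mSpan F A ⊔ mSpan F B := by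
  rw [mSpan, mSpan, mSpan, ← Submodule.span_union]
  congr 1
  ext x
  simp

lemma finrank_mSpan_add_le (A B : Multiset V) :
    Module.finrank F (mSpan F (A + B)) ≤ Module.finrank F (mSpan F A) + Multiset.card B := by
  rw [mSpan_add]
  exact (Submodule.finrank_add_le_finrank_add_finrank _ _).trans
    (Nat.add_le_add_left (finrank_mSpan_le_card B) _)

lemma finrank_mSpan_eq_card_of_le {S T : Multiset V} (hST : S ≤ T)
    (hT : Module.finrank F (mSpan F T) = Multiset.card T) :
    Module.finrank F (mSpan F S) = Multiset.card S := by
  obtain ⟨X, rfl⟩ := Multiset.le_iff_exists_add.mp hST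
  have := finrank_mSpan_add_le (F := F) S X
  have := finrank_mSpan_le_card (F := F) S
  rw [Multiset.card_add] at hT
  omega

lemma QStable.mSpan_eq {q : ℕ} {P T : Multiset V} (hP : QStable F q P)
    (hT : T ≤ P.filter (· ≠ 0)) (hcard : nnz P ≤ Multiset.card T + q) :
    mSpan F T = mSpan F P := by
  set R := P.filter (· ≠ 0) - T
  have hR_nonzero : R.filter (· ≠ 0) = R :=
    Multiset.filter_eq_self.mpr fun _ hv =>
      (Multiset.mem_filter.mp (Multiset.mem_of_le tsub_le_self hv)).2
  have hR_card : Multiset.card R ≤ q := by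
    rw [Multiset.card_sub hT]
    unfold nnz at hcard
    omega
  have hPR : (P - R).filter (· ≠ 0) = T := by
    rw [Multiset.filter_sub, hR_nonzero, tsub_tsub_cancel_of_le hT]
  rw [← hP R (tsub_le_self.trans (Multiset.filter_le _ P)) hR_card,
    ← mSpan_filter_ne_zero (P - R), hPR]

end mSpan

theorem stmt_1_general {F V : Type*} [Field F] [AddCommGroup V] [Module F V]
    (q : ℕ) (P : Multiset V) (hP : QStable F q P)
    (hcard : nnz P ≤ Module.finrank F (mSpan F P) + q) :
    ∀ S : Multiset V, S ≤ P → (∀ v ∈ S, v ≠ 0) →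
      Multiset.card S ≤ Module.finrank F (mSpan F P) →
      Module.finrank F (mSpan F S) = Multiset.card S := by
  intro S hSP hS0 hScard
  have hS : S ≤ P.filter (· ≠ 0) := Multiset.le_filter.mpr ⟨hSP, hS0⟩
  have hn : Module.finrank F (mSpan F P) ≤ Multiset.card (P.filter (· ≠ 0)) := by
    rw [← mSpan_filter_ne_zero P]
    exact finrank_mSpan_le_card _
  obtain ⟨T, hST, hT, hTcard⟩ := Multiset.exists_le_le_card_eq hS hScard hn
  have hTspan : mSpan F T = mSpan F P := hP.mSpan_eq hT (hTcard ▸ hcard)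
  exact finrank_mSpan_eq_card_of_le hST (by rw [hTspan, hTcard])

/-- In a `q`-stable multiset `P` with at most `dim (span P) + q` nonzero vectors, any
collection of at most `dim (span P)` nonzero vectors of `P` is linearly independent
(equivalently, spans a subspace of dimension equal to its cardinality). -/
theorem stmt_1 {F V : Type*} [Field F] [AddCommGroup V] [Module F V] [FiniteDimensional F V]
    (q : ℕ) (P : Multiset V) (hP : QStable F q P)
    (hcard : nnz P ≤ Module.finrank F (mSpan F P) + q) :
    ∀ S : Multiset V, S ≤ P → (∀ v ∈ S, v ≠ 0) →
      Multiset.card S ≤ Module.finrank F (mSpan F P) →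
      Module.finrank F (mSpan F S) = Multiset.card S :=
  stmt_1_general q P hP hcard
end

section
/- Let P be a 1-stable finite multiset of vectors in a finite-dimensional vector space over a field. Define two elements a, b of P to be equivalent if for every linear relation Σ_{v∈P} c_v v = 0 among the elements of P (with coefficients indexed by the multiset), the coefficients c_a and c_b are simultaneously zero or simultaneously nonzero. Then P is 2-stable if and only if no two distinct elements of P are equivalent. -/
open scoped Classical

/-- Two elements (positions) `a`, `b` of the finite family `p : ι → V` are equivalent if
for every linear relation `∑ i, c i • p i = 0` the coefficients at `a` and at `b` are
simultaneously zero or simultaneously nonzero. -/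
def LinEquivRel (F : Type*) {V ι : Type*} [Field F] [AddCommGroup V] [Module F V]
    [Fintype ι] (p : ι → V) (a b : ι) : Prop :=
  ∀ c : ι → F, ∑ i, c i • p i = 0 → (c a = 0 ↔ c b = 0)

/-!
Removing a set `s` of positions preserves the span iff each removed vector lies in the span of
the remaining ones, and `p a` (with `a ∈ s`) lies in the span of the vectors outside `s` iff some
linear relation is nonzero at `a` and vanishes on the rest of `s`. Hence if `P` is `2`-stable,
removing `{a, b}` yields a relation nonzero at `a` and zero at `b`, so `a` and `b` are not
equivalent. Conversely, a relation separating `a` from `b`, say `c a ≠ 0 = c b`, puts `p a` in the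
span of the vectors outside `{a, b}`; by `1`-stability `p b` lies in the span of the vectors
outside `{b}`, hence also in the span of those outside `{a, b}`.
-/

open Submodule Set Finset

theorem Multiset.exists_le_map_eq_of_le_map {α β : Type*} {f : α → β} {S : Multiset β} :
    ∀ {t : Multiset α}, S ≤ t.map f → ∃ u ≤ t, u.map f = S := by
  induction S using Multiset.induction_on with
  | empty => exact fun _ => ⟨0, Multiset.zero_le _, rfl⟩
  | cons b S ih =>
    intro t h
    obtain ⟨i, hi, rfl⟩ := Multiset.mem_map.1 (Multiset.mem_of_le h (Multiset.mem_cons_self _ _))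
    rw [← Multiset.cons_erase hi, Multiset.map_cons, Multiset.cons_le_cons_iff] at h
    obtain ⟨u, hu, rfl⟩ := ih h
    exact ⟨i ::ₘ u, (Multiset.cons_le_cons i hu).trans_eq (Multiset.cons_erase hi), by simp⟩

section
variable {ι β : Type*} [Fintype ι]

theorem exists_finset_map_eq_of_le_map_univ {f : ι → β} {S : Multiset β}
    (h : S ≤ univ.val.map f) : ∃ s : Finset ι, s.val.map f = S := by
  obtain ⟨u, hu, rfl⟩ := Multiset.exists_le_map_eq_of_le_map h
  exact ⟨⟨u, Multiset.nodup_of_le hu univ.nodup⟩, rfl⟩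

theorem map_univ_val_sub_map_val (f : ι → β) (s : Finset ι) :
    univ.val.map f - s.val.map f = sᶜ.val.map f := by
  rw [← add_tsub_cancel_of_le (val_le_iff.2 (subset_univ s)), Multiset.map_add,
    add_tsub_cancel_left, ← sdiff_val, ← Finset.compl_eq_univ_sdiff]

end

section
variable {F V ι : Type*} [Field F] [AddCommGroup V] [Module F V] (p : ι → V)

theorem mSpan_map_val (s : Finset ι) : mSpan F (s.val.map p) = span F (p '' s) := by
  simp [mSpan, Set.image]

theorem span_image_compl_eq_span_range_iff (s : Set ι) :
    span F (p '' sᶜ) = span F (range p) ↔ ∀ i ∈ s, p i ∈ span F (p '' sᶜ) := by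
  refine ⟨fun h i _ => h ▸ subset_span (mem_range_self i), fun h => ?_⟩
  refine le_antisymm (span_mono (image_subset_range p _)) (span_le.2 ?_)
  rintro _ ⟨i, rfl⟩
  by_cases hi : i ∈ s
  · exact h i hi
  · exact subset_span (mem_image_of_mem p hi)

variable [Fintype ι]

theorem mem_span_image_iff_exists_fun_supported {s : Set ι} {x : V} :
    x ∈ span F (p '' s) ↔ ∃ c : ι → F, (∀ i ∉ s, c i = 0) ∧ ∑ i, c i • p i = x := by
  rw [Finsupp.mem_span_image_iff_linearCombination]
  constructor
  · rintro ⟨l, hl, rfl⟩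
    exact ⟨l, fun i hi => Finsupp.notMem_support_iff.1 fun h => hi (hl h),
      by simp [Finsupp.linearCombination_apply, Finsupp.sum_fintype]⟩
  · rintro ⟨c, hc, rfl⟩
    refine ⟨Finsupp.equivFunOnFinite.symm c, fun i hi => ?_, ?_⟩
    · by_contra h
      exact Finsupp.mem_support_iff.1 hi (hc i h)
    · simp [Finsupp.linearCombination_apply, Finsupp.sum_fintype]

theorem mem_span_image_compl_iff {s : Set ι} {a : ι} (ha : a ∈ s) :
    p a ∈ span F (p '' sᶜ) ↔
      ∃ c : ι → F, ∑ i, c i • p i = 0 ∧ c a ≠ 0 ∧ ∀ i ∈ s, i ≠ a → c i = 0 := by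
  rw [mem_span_image_iff_exists_fun_supported]
  constructor
  · rintro ⟨c, hc, hsum⟩
    refine ⟨c - Pi.single a 1, ?_, ?_, fun i hi hia => ?_⟩
    · simp [sub_smul, Finset.sum_sub_distrib, hsum]
    · simp [hc a (not_not.2 ha)]
    · simp [hc i (not_not.2 hi), hia]
  · rintro ⟨c, hsum, hca, hc⟩
    refine ⟨-(c a)⁻¹ • c + Pi.single a 1, fun i hi => ?_, ?_⟩
    · by_cases hia : i = a
      · subst hia; simp [hca]
      · simp [hc i (not_not.1 hi) hia, hia]
    · simp [add_smul, Finset.sum_add_distrib, mul_smul, ← Finset.smul_sum, hsum]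

theorem qStable_iff_forall_mem_span (q : ℕ) :
    QStable F q (univ.val.map p) ↔
      ∀ s : Finset ι, #s ≤ q → ∀ i ∈ s, p i ∈ span F (p '' (↑s)ᶜ) := by
  have hdel (s : Finset ι) : mSpan F (univ.val.map p - s.val.map p) = mSpan F (univ.val.map p) ↔
      ∀ i ∈ s, p i ∈ span F (p '' (↑s)ᶜ) := by
    rw [map_univ_val_sub_map_val, mSpan_map_val, mSpan_map_val, coe_compl, coe_univ, image_univ,
      span_image_compl_eq_span_range_iff]
    rfl
  constructor
  · intro h s hs
    exact (hdel s).1 (h _ (Multiset.map_le_map (val_le_iff.2 (subset_univ s))) (by simpa using hs))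
  · intro h S hS hq
    obtain ⟨s, rfl⟩ := exists_finset_map_eq_of_le_map_univ hS
    exact (hdel s).2 (h s (by simpa using hq))

variable {p}

theorem mem_span_image_compl_singleton_of_qStable_one (h1 : QStable F 1 (univ.val.map p))
    (i : ι) : p i ∈ span F (p '' {i}ᶜ) := by
  simpa using (qStable_iff_forall_mem_span p 1).1 h1 {i} (Finset.card_singleton i).le i
    (Finset.mem_singleton_self i)

theorem mem_span_image_compl_pair_of_qStable_one (h1 : QStable F 1 (univ.val.map p)) {a b : ι}
    {c : ι → F} (hc : ∑ i, c i • p i = 0) (ha : c a ≠ 0) (hb : c b = 0) :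
    ∀ i ∈ ({a, b} : Set ι), p i ∈ span F (p '' {a, b}ᶜ) := by
  have hpa : p a ∈ span F (p '' {a, b}ᶜ) :=
    (mem_span_image_compl_iff p (Set.mem_insert a _)).2
      ⟨c, hc, ha, by rintro i (rfl | rfl) hia; exacts [(hia rfl).elim, hb]⟩
  have hle : span F (p '' {b}ᶜ) ≤ span F (p '' {a, b}ᶜ) := span_le.2 <| by
    rintro _ ⟨i, hi, rfl⟩
    by_cases hia : i = a
    · exact hia ▸ hpa
    · exact subset_span (mem_image_of_mem p (by simp_all))
  rintro i (rfl | rfl)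
  exacts [hpa, hle (mem_span_image_compl_singleton_of_qStable_one h1 i)]

end

/-- A `1`-stable finite multiset (given as a finite family `p : ι → V`) is `2`-stable
if and only if no two distinct elements of it are equivalent. -/
theorem stmt_7 {F V ι : Type*} [Field F] [AddCommGroup V] [Module F V] [Fintype ι]
    (p : ι → V) (h1 : QStable F 1 (Multiset.map p Finset.univ.val)) :
    QStable F 2 (Multiset.map p Finset.univ.val) ↔
      ∀ a b : ι, a ≠ b → ¬ LinEquivRel F p a b := by
  rw [qStable_iff_forall_mem_span]
  constructor
  · intro h2 a b hab hequiv
    have hpa := h2 {a, b} card_le_two a (Finset.mem_insert_self a _)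
    rw [coe_pair] at hpa
    obtain ⟨c, hc, hca, hcb⟩ := (mem_span_image_compl_iff p (Set.mem_insert a {b})).1 hpa
    exact hca ((hequiv c hc).2 (hcb b (Set.mem_insert_of_mem a rfl) hab.symm))
  · intro h s hs
    rcases Nat.lt_or_ge #s 2 with hlt | hge
    · exact (qStable_iff_forall_mem_span p 1).1 h1 s (by omega)
    obtain ⟨a, b, hab, rfl⟩ := card_eq_two.1 (le_antisymm hs hge)
    obtain ⟨c, hc, hcab⟩ : ∃ c : ι → F, ∑ i, c i • p i = 0 ∧ ¬(c a = 0 ↔ c b = 0) := by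
      simpa [LinEquivRel] using h a b hab
    intro i hi
    rw [← mem_coe] at hi
    rw [coe_pair] at hi ⊢
    by_cases hca : c a = 0
    · rw [Set.pair_comm] at hi ⊢
      exact mem_span_image_compl_pair_of_qStable_one h1 hc (by tauto) hca i hi
    · exact mem_span_image_compl_pair_of_qStable_one h1 hc hca (by tauto) i hi
end

section
/- Let P be a 1-stable finite multiset of vectors and N an equivalence class of P (for the relation: a ~ b iff every linear relation among elements of P has coefficients at a and b simultaneously zero or nonzero). Then there exists a nontrivial linear combination Σ_{v∈N} c_v v lying in the span of P \ N with all coefficients c_v nonzero, and such a combination is unique up to a scalar multiple. -/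
/-!
Since `P` is 1-stable, each vector `p a` lies in the span of the others, so there is a linear
relation `d` among the vectors of `P` with `d a ≠ 0`; by the definition of the equivalence, `d` is
then nonzero on the whole class `N` of `a`, and its restriction to `N` is the required combination.
Conversely, a combination supported on `N` that lies in the span of `P \ N` extends to a linear
relation. Given two relations `r`, `r'` with `r a ≠ 0`, the relation `r a • r' - r' a • r`
vanishes at `a`, hence on all of `N`, so `r'` is proportional to `r` on `N`.
-/

open scoped Classical

section Ring

variable {R M ι : Type*} [Ring R] [AddCommGroup M] [Module R M] [Fintype ι]

theorem exists_fun_of_mem_span_image {p : ι → M} {s : Set ι} {x : M}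
    (hx : x ∈ Submodule.span R (p '' s)) :
    ∃ e : ι → R, (∀ i ∉ s, e i = 0) ∧ ∑ i, e i • p i = x := by
  obtain ⟨l, hl, rfl⟩ := (Finsupp.mem_span_image_iff_linearCombination R).mp hx
  refine ⟨l, fun i hi => Finsupp.notMem_support_iff.mp fun h => hi (hl h), ?_⟩
  rw [Finsupp.linearCombination_apply, Finsupp.sum_fintype _ _ fun i => zero_smul R (p i)]

theorem sum_indicator_smul_mem_span_image_compl {p : ι → M} {d : ι → R}
    (hd : ∑ i, d i • p i = 0) (s : Set ι) :
    ∑ i, s.indicator d i • p i ∈ Submodule.span R (p '' sᶜ) := by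
  have hsplit : ∑ i, s.indicator d i • p i = -∑ i, sᶜ.indicator d i • p i := by
    rw [eq_neg_iff_add_eq_zero, ← Finset.sum_add_distrib, ← hd]
    simp only [← add_smul, Set.indicator_self_add_compl_apply]
  rw [hsplit]
  refine Submodule.neg_mem _ (Submodule.sum_mem _ fun i _ => ?_)
  by_cases hi : i ∈ sᶜ
  · exact Submodule.smul_mem _ _ (Submodule.subset_span ⟨i, hi, rfl⟩)
  · simp [Set.indicator_of_notMem hi]

theorem exists_relation_eqOn_of_sum_mem_span_image_compl {p : ι → M} {c : ι → R} {s : Set ι}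
    (hc : ∑ i, c i • p i ∈ Submodule.span R (p '' sᶜ)) :
    ∃ r : ι → R, ∑ i, r i • p i = 0 ∧ Set.EqOn r c s := by
  obtain ⟨e, he, hsum⟩ := exists_fun_of_mem_span_image hc
  refine ⟨c - e, ?_, fun i hi => ?_⟩
  · simp [sub_smul, Finset.sum_sub_distrib, hsum]
  · simp [he i (by simpa using hi)]

end Ring

section Field

variable {F V ι : Type*} [Field F] [AddCommGroup V] [Module F V] [Fintype ι]

theorem QStable.mem_span_image_compl_singleton {p : ι → V}
    (h1 : QStable F 1 (Multiset.map p Finset.univ.val)) (a : ι) :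
    p a ∈ Submodule.span F (p '' {a}ᶜ) := by
  have hmem : p a ∈ Multiset.map p Finset.univ.val := Multiset.mem_map_of_mem p (Finset.mem_univ a)
  have hstable := h1 {p a} (Multiset.singleton_le.mpr hmem) (by simp)
  rw [Multiset.sub_singleton, ← Multiset.map_erase_of_mem p _ (Finset.mem_univ a),
    ← Finset.erase_val] at hstable
  have hpa : p a ∈ mSpan F (Multiset.map p Finset.univ.val) := Submodule.subset_span hmem
  rw [← hstable, mSpan] at hpa
  convert hpa using 2
  ext x
  simp [Finset.univ.nodup.mem_erase_iff]

theorem QStable.exists_relation_ne_zero {p : ι → V}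
    (h1 : QStable F 1 (Multiset.map p Finset.univ.val)) (a : ι) :
    ∃ d : ι → F, ∑ i, d i • p i = 0 ∧ d a ≠ 0 := by
  obtain ⟨e, he, hsum⟩ := exists_fun_of_mem_span_image (h1.mem_span_image_compl_singleton a)
  refine ⟨e - Pi.single a 1, ?_, ?_⟩
  · simp [sub_smul, Finset.sum_sub_distrib, hsum, Pi.single_apply]
  · simp [he a (by simp)]

theorem LinEquivRel.eq_div_mul_of_relations {p : ι → V} {a b : ι} (hab : LinEquivRel F p a b)
    {r r' : ι → F} (hr : ∑ i, r i • p i = 0) (hr' : ∑ i, r' i • p i = 0) (hra : r a ≠ 0) :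
    r' b = r' a / r a * r b := by
  have hcomb : ∑ i, (r a * r' i - r' a * r i) • p i = 0 := by
    simp [sub_smul, mul_smul, Finset.sum_sub_distrib, ← Finset.smul_sum, hr, hr']
  have hb : r a * r' b - r' a * r b = 0 := (hab _ hcomb).mp (by ring)
  field_simp
  linear_combination hb

end Field

/-- For a `1`-stable finite multiset of vectors (given as a family `p : ι → V`) and an
equivalence class `N`, there is a nontrivial linear combination of the vectors of `N`,
with all coefficients nonzero, lying in the span of the remaining vectors; moreover such
a combination is unique up to a (nonzero) scalar multiple. -/
theorem stmt_9 {F V ι : Type*} [Field F] [AddCommGroup V] [Module F V] [Fintype ι]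
    (p : ι → V) (h1 : QStable F 1 (Multiset.map p Finset.univ.val))
    (N : Set ι) (hN : ∃ a, N = {b | LinEquivRel F p a b}) :
    ∃ c : ι → F, (∀ a, a ∉ N → c a = 0) ∧ (∀ a ∈ N, c a ≠ 0) ∧
      (∑ i, c i • p i) ∈ Submodule.span F (p '' Nᶜ) ∧
      ∀ c' : ι → F, (∀ a, a ∉ N → c' a = 0) → (∃ a ∈ N, c' a ≠ 0) →
        (∑ i, c' i • p i) ∈ Submodule.span F (p '' Nᶜ) →
        ∃ t : F, t ≠ 0 ∧ ∀ a, c' a = t * c a := by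
  obtain ⟨a, rfl⟩ := hN
  obtain ⟨d, hd, hda⟩ := h1.exists_relation_ne_zero a
  refine ⟨{b | LinEquivRel F p a b}.indicator d, fun b hb => Set.indicator_of_notMem hb d,
    fun b hb => ?_, sum_indicator_smul_mem_span_image_compl hd _, ?_⟩
  · rw [Set.indicator_of_mem hb]
    exact (hb d hd).not.mp hda
  rintro c' hc'N ⟨b₀, hb₀, hc'b₀⟩ hc'span
  obtain ⟨r', hr', hr'c'⟩ := exists_relation_eqOn_of_sum_mem_span_image_compl hc'span
  have hr'a : r' a ≠ 0 := (hb₀ r' hr').not.mpr (hr'c' hb₀ ▸ hc'b₀)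
  refine ⟨r' a / d a, div_ne_zero hr'a hda, fun b => ?_⟩
  by_cases hb : LinEquivRel F p a b
  · rw [← hr'c' hb, Set.indicator_of_mem hb]
    exact hb.eq_div_mul_of_relations hd hr' hda
  · rw [hc'N b hb, Set.indicator_of_notMem hb, mul_zero]
end

section
/- Let g be an element of a compact group G ⊆ O(V) whose identity component G⁰ is a torus, take v ∈ V with finite stabilizer G_v containing g, and let N_v = (g·v)^⊥. Then dim((E − g)N_v) = rk(E − g|_V) − rk(E − Ad(g)), where E is the identity. In particular, g acts on N_v as a pseudoreflection (fixed-point subspace of codimension 2) or identically if and only if rk(E − g|_V) − rk(E − Ad(g)) ∈ {0, 2}. -/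
/-!
As an isometry preserving `T`, `g` also preserves `N = Tᗮ`, hence so does `E − g`, and the range
of `E − g` splits as `(E − g) T ⊕ (E − g) N`. Rank–nullity for `E − g` on `N` identifies
`dim ((E − g) N)` with the codimension in `N` of the fixed space of `g`.
-/

open Module Module.End Submodule LinearMap

namespace Module.End

lemma id_sub_mem_invtSubmodule {R M : Type*} [Ring R] [AddCommGroup M] [Module R M]
    {f : End R M} {p : Submodule R M} (hp : p ∈ f.invtSubmodule) :
    p ∈ invtSubmodule (LinearMap.id - f) :=
  fun _ hx ↦ p.sub_mem hx (hp hx)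

lemma map_eq_of_mem_invtSubmodule {K V : Type*} [DivisionRing K] [AddCommGroup V] [Module K V]
    (e : V ≃ₗ[K] V) {p : Submodule K V} [FiniteDimensional K p]
    (hp : p ∈ invtSubmodule (e : End K V)) : p.map (e : End K V) = p :=
  eq_of_le_of_finrank_eq ((mem_invtSubmodule_iff_map_le _).1 hp) (LinearEquiv.finrank_map_eq e p)

end Module.End

lemma LinearIsometryEquiv.orthogonal_mem_invtSubmodule {𝕜 E : Type*} [RCLike 𝕜]
    [NormedAddCommGroup E] [InnerProductSpace 𝕜 E] (g : E ≃ₗᵢ[𝕜] E) {K : Submodule 𝕜 E}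
    [FiniteDimensional 𝕜 K] (hK : K ∈ invtSubmodule (g.toLinearEquiv : End 𝕜 E)) :
    Kᗮ ∈ invtSubmodule (g.toLinearEquiv : End 𝕜 E) := by
  rw [mem_invtSubmodule_iff_map_le, map_orthogonal_equiv, map_eq_of_mem_invtSubmodule _ hK]

namespace LinearMap

variable {K V : Type*} [DivisionRing K] [AddCommGroup V] [Module K V]

lemma finrank_range_eq_add_of_isCompl [FiniteDimensional K V] {f : End K V}
    {p q : Submodule K V} (hpq : IsCompl p q) (hp : p ∈ f.invtSubmodule)
    (hq : q ∈ f.invtSubmodule) :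
    finrank K (range f) = finrank K (p.map f) + finrank K (q.map f) := by
  have hsup : range f = p.map f ⊔ q.map f := by
    rw [range_eq_map, ← hpq.sup_eq_top, Submodule.map_sup]
  have hinf : p.map f ⊓ q.map f = ⊥ :=
    eq_bot_iff.2 <| hpq.inf_eq_bot ▸ inf_le_inf ((mem_invtSubmodule_iff_map_le _).1 hp)
      ((mem_invtSubmodule_iff_map_le _).1 hq)
  have hdim := finrank_sup_add_finrank_inf_eq (p.map f) (q.map f)
  rw [hinf, finrank_bot, ← hsup] at hdim
  omega

lemma finrank_map_add_finrank_inf_ker {W : Type*} [AddCommGroup W] [Module K W]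
    (f : V →ₗ[K] W) (p : Submodule K V) [FiniteDimensional K p] :
    finrank K (p.map f) + finrank K ↥(p ⊓ ker f) = finrank K p := by
  have h := finrank_range_add_finrank_ker (f.domRestrict p)
  rwa [range_domRestrict, ker_domRestrict, ← finrank_map_subtype_eq, map_comap_subtype] at h

end LinearMap

theorem stmt_12_general {V : Type*} [NormedAddCommGroup V] [InnerProductSpace ℝ V]
    [FiniteDimensional ℝ V] (g : V ≃ₗᵢ[ℝ] V)
    (T : Submodule ℝ V) (hT : ∀ x ∈ T, g x ∈ T) :
    let N : Submodule ℝ V := Submodule.orthogonal T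
    let g' : V →ₗ[ℝ] V := (g.toLinearEquiv : V →ₗ[ℝ] V)
    (Module.finrank ℝ (Submodule.map (LinearMap.id - g') N) =
      Module.finrank ℝ (LinearMap.range (LinearMap.id - g')) -
        Module.finrank ℝ (Submodule.map (LinearMap.id - g') T)) ∧
    ((Module.finrank ℝ N -
        Module.finrank ℝ ↥(N ⊓ LinearMap.ker (LinearMap.id - g')) ∈ ({0, 2} : Set ℕ)) ↔
      (Module.finrank ℝ (LinearMap.range (LinearMap.id - g')) -
        Module.finrank ℝ (Submodule.map (LinearMap.id - g') T) ∈ ({0, 2} : Set ℕ))) := by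
  intro N g'
  set f : End ℝ V := LinearMap.id - g'
  have hT' : T ∈ invtSubmodule g' := hT
  have hN : N ∈ invtSubmodule g' := g.orthogonal_mem_invtSubmodule hT'
  have hrange : finrank ℝ (range f) = finrank ℝ (T.map f) + finrank ℝ (N.map f) :=
    LinearMap.finrank_range_eq_add_of_isCompl T.isCompl_orthogonal
      (id_sub_mem_invtSubmodule hT') (id_sub_mem_invtSubmodule hN)
  have hnullity := LinearMap.finrank_map_add_finrank_inf_ker f N
  refine ⟨by omega, ?_⟩
  rw [show finrank ℝ N - finrank ℝ ↥(N ⊓ ker f) = finrank ℝ (range f) - finrank ℝ (T.map f) by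
    omega]

/-- Let `g` be a linear isometry of a real finite-dimensional inner product space `V`
fixing a vector `v` and leaving invariant the tangent space `T` to the orbit of `v`
(on which it acts as `Ad g`), and let `N = Tᗮ`. Then
`dim((E − g) N) = rk(E − g) − rk(E − Ad g)`; in particular `g` acts on `N` as a
pseudoreflection (fixed subspace of codimension `2`) or identically if and only if
`rk(E − g) − rk(E − Ad g) ∈ {0, 2}`. -/
theorem stmt_12 {V : Type*} [NormedAddCommGroup V] [InnerProductSpace ℝ V]
    [FiniteDimensional ℝ V] (g : V ≃ₗᵢ[ℝ] V) (v : V) (hv : g v = v)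
    (T : Submodule ℝ V) (hT : ∀ x ∈ T, g x ∈ T) :
    let N : Submodule ℝ V := Submodule.orthogonal T
    let g' : V →ₗ[ℝ] V := (g.toLinearEquiv : V →ₗ[ℝ] V)
    (Module.finrank ℝ (Submodule.map (LinearMap.id - g') N) =
      Module.finrank ℝ (LinearMap.range (LinearMap.id - g')) -
        Module.finrank ℝ (Submodule.map (LinearMap.id - g') T)) ∧
    ((Module.finrank ℝ N -
        Module.finrank ℝ ↥(N ⊓ LinearMap.ker (LinearMap.id - g')) ∈ ({0, 2} : Set ℕ)) ↔
      (Module.finrank ℝ (LinearMap.range (LinearMap.id - g')) -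
        Module.finrank ℝ (Submodule.map (LinearMap.id - g') T) ∈ ({0, 2} : Set ℕ))) :=
  stmt_12_general g T hT
end

section
/- Let H be the subgroup of the torus 𝕋ⁿ ⊆ GL_n(ℂ) (n ≥ 2) consisting of all diagonal unitary operators diag(λ₁,…,λₙ) with |λᵢ| = 1 and λ₁^{a₁} ⋯ λₙ^{aₙ} = 1, where a₁,…,aₙ are positive integers. Then two vectors z, z′ ∈ ℂⁿ lie in the same H-orbit if and only if |zᵢ| = |z′ᵢ| for all i and z₁^{a₁}⋯zₙ^{aₙ} = z′₁^{a₁}⋯z′ₙ^{a′ₙ} (the latter condition being automatic if some coordinate vanishes). -/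
/-!
Equal moduli give unimodular `mᵢ` with `z'ᵢ = mᵢ zᵢ`, and `c = ∏ mᵢ^{aᵢ}` is
unimodular. If no `zᵢ` vanishes, comparing `∏ z'ᵢ^{aᵢ} = c ∏ zᵢ^{aᵢ}` forces `c = 1`. If
`zⱼ = 0`, then `mⱼ` is arbitrary, and multiplying it by a unimodular `aⱼ`-th root of `c⁻¹`
makes the product `1` without changing `m • z`.
-/

open Finset

namespace Complex

theorem exists_norm_eq_one_mul_eq {z w : ℂ} (h : ‖z‖ = ‖w‖) : ∃ u : ℂ, ‖u‖ = 1 ∧ w = u * z := by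
  rcases eq_or_ne z 0 with rfl | hz
  · exact ⟨1, norm_one, by simpa using h.symm⟩
  · refine ⟨w / z, ?_, (div_mul_cancel₀ w hz).symm⟩
    rw [norm_div, ← h, div_self (norm_ne_zero_iff.mpr hz)]

theorem exists_norm_eq_one_pow_eq {c : ℂ} (hc : ‖c‖ = 1) {k : ℕ} (hk : 0 < k) :
    ∃ r : ℂ, ‖r‖ = 1 ∧ r ^ k = c := by
  obtain ⟨r, hr⟩ := IsAlgClosed.exists_pow_nat_eq c hk
  refine ⟨r, ?_, hr⟩
  have : ‖r‖ ^ k = 1 := by rw [← norm_pow, hr, hc]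
  exact (pow_eq_one_iff_of_nonneg (norm_nonneg r) hk.ne').mp this

end Complex

section Orbit

variable {ι : Type*} [Fintype ι] (a : ι → ℕ)

theorem prod_mul_pow_eq {M : Type*} [CommMonoid M] (l z : ι → M) :
    ∏ i, (l i * z i) ^ a i = (∏ i, l i ^ a i) * ∏ i, z i ^ a i := by
  simp only [mul_pow, prod_mul_distrib]

theorem exists_prod_pow_eq_one_mul_eq_of_eq_zero {m z : ι → ℂ} (hm : ∀ i, ‖m i‖ = 1)
    {j : ι} (hzj : z j = 0) (haj : 0 < a j) :
    ∃ l : ι → ℂ, (∀ i, ‖l i‖ = 1) ∧ ∏ i, l i ^ a i = 1 ∧ ∀ i, l i * z i = m i * z i := by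
  classical
  set c := ∏ i, m i ^ a i
  have hc : ‖c‖ = 1 := by simp [c, hm]
  obtain ⟨r, hr, hrc⟩ := Complex.exists_norm_eq_one_pow_eq hc haj
  have hc0 : c ≠ 0 := norm_ne_zero_iff.mp (by rw [hc]; exact one_ne_zero)
  set e : ι → ℂ := Pi.mulSingle j r⁻¹
  have he : ∏ i, e i ^ a i = c⁻¹ := by
    rw [prod_eq_single j (fun i _ hij => by simp [e, hij]) (by simp)]
    simp [e, hrc]
  refine ⟨fun i => m i * e i, fun i => ?_, ?_, fun i => ?_⟩
  · rcases eq_or_ne i j with rfl | hij <;> simp [e, *]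
  · rw [prod_mul_pow_eq, he, mul_inv_cancel₀ hc0]
  · rcases eq_or_ne i j with rfl | hij <;> simp [e, *]

theorem exists_unimodular_prod_pow_eq_one_mul_eq_iff (ha : ∀ i, 0 < a i) (z z' : ι → ℂ) :
    (∃ l : ι → ℂ, (∀ i, ‖l i‖ = 1) ∧ (∏ i, l i ^ a i = 1) ∧ ∀ i, z' i = l i * z i) ↔
      ((∀ i, ‖z i‖ = ‖z' i‖) ∧ ∏ i, z i ^ a i = ∏ i, z' i ^ a i) := by
  constructor
  · rintro ⟨l, hl, hla, hlz⟩
    obtain rfl : z' = fun i => l i * z i := funext hlz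
    exact ⟨fun i => by simp [hl], by rw [prod_mul_pow_eq, hla, one_mul]⟩
  · rintro ⟨hnorm, hprod⟩
    choose m hm hmz using fun i => Complex.exists_norm_eq_one_mul_eq (hnorm i)
    by_cases hz : ∃ j, z j = 0
    · obtain ⟨j, hzj⟩ := hz
      obtain ⟨l, hl, hla, hlz⟩ := exists_prod_pow_eq_one_mul_eq_of_eq_zero a hm hzj (ha j)
      exact ⟨l, hl, hla, fun i => (hmz i).trans (hlz i).symm⟩
    · have hP : ∏ i, z i ^ a i ≠ 0 :=
        prod_ne_zero_iff.mpr fun i _ => pow_ne_zero _ (not_exists.mp hz i)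
      have hmP : (∏ i, m i ^ a i) * ∏ i, z i ^ a i = ∏ i, z i ^ a i := by
        rw [← prod_mul_pow_eq, hprod]
        simp only [hmz]
      exact ⟨m, hm, (mul_eq_right₀ hP).mp hmP, hmz⟩

end Orbit

theorem stmt_13_general (n : ℕ) (a : Fin n → ℕ) (ha : ∀ i, 0 < a i)
    (z z' : Fin n → ℂ) :
    (∃ l : Fin n → ℂ, (∀ i, ‖l i‖ = 1) ∧ (∏ i, l i ^ a i = 1) ∧ ∀ i, z' i = l i * z i) ↔
      ((∀ i, ‖z i‖ = ‖z' i‖) ∧ ∏ i, z i ^ a i = ∏ i, z' i ^ a i) :=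
  exists_unimodular_prod_pow_eq_one_mul_eq_iff a ha z z'

/-- Orbits of the subtorus `H = {diag(λ₁,…,λₙ) : |λᵢ| = 1, λ₁^{a₁}⋯λₙ^{aₙ} = 1}` acting
diagonally on `ℂⁿ` (`n ≥ 2`, `aᵢ` positive integers): two vectors `z`, `z'` lie in the
same `H`-orbit iff `|zᵢ| = |z'ᵢ|` for all `i` and `∏ zᵢ^{aᵢ} = ∏ z'ᵢ^{aᵢ}`. -/
theorem stmt_13 (n : ℕ) (hn : 2 ≤ n) (a : Fin n → ℕ) (ha : ∀ i, 0 < a i)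
    (z z' : Fin n → ℂ) :
    (∃ l : Fin n → ℂ, (∀ i, ‖l i‖ = 1) ∧ (∏ i, l i ^ a i = 1) ∧ ∀ i, z' i = l i * z i) ↔
      ((∀ i, ‖z i‖ = ‖z' i‖) ∧ ∏ i, z i ^ a i = ∏ i, z' i ^ a i) :=
  stmt_13_general n a ha z z'
end

section
/- Let H be the subgroup of diagonal unitary operators diag(λ₁,…,λₙ) on ℂⁿ (n ≥ 2) with λ₁^{a₁}⋯λₙ^{aₙ} = 1 for fixed positive integers aᵢ, and suppose the n one-dimensional complex coordinate representations of H are pairwise non-isomorphic as real representations. If g ∈ U(n)-normalizer of H is a composition g = g₁∘g₂∘g₃ where g₁ permutes coordinates by a permutation σ, g₂ conjugates some subset of the coordinates, and g₃ multiplies coordinate i by a unit complex number νᵢ, then a_{σ(i)} = a_i for all i, and g₂ is either the identity or conjugates all coordinates. -/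
open scoped Classical

/-- Membership in the subtorus `H ⊆ 𝕋ⁿ` defined by the character with exponents `a`. -/
def memH {n : ℕ} (a : Fin n → ℕ) (l : Fin n → ℂ) : Prop :=
  (∀ i, ‖l i‖ = 1) ∧ ∏ i, l i ^ a i = 1

/-- The diagonal operator `diag(l₁,…,lₙ)` on `ℂⁿ`. -/
def Dop {n : ℕ} (l : Fin n → ℂ) (z : Fin n → ℂ) : Fin n → ℂ := fun i => l i * z i

/-!
Conjugating `diag l` by `g` gives `diag m` with `m i = l (σ i)` or its inverse, so the character
with exponents `c j = ± a (σ⁻¹ j)` (sign `-` exactly on `S`) is trivial on `H`. Testing on the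
circles `t ↦ exp (i t (a k eⱼ - a j eₖ))` inside `H` shows that a character trivial on `H` is
proportional to `a`. As `a` is positive, all signs of `c` agree, so `S` is empty or everything;
and `|c| = a ∘ σ⁻¹` is a multiple of `a` with the same sum, hence equal to `a`.
-/

open Complex Finset

lemma prod_exp_mul_I_zpow {ι : Type*} [Fintype ι] (e w : ι → ℤ) (t : ℝ) :
    ∏ x, exp (↑(e x * t) * I) ^ w x = exp (↑((∑ x, e x * w x : ℤ) * t) * I) := by
  simp_rw [← exp_int_mul, ← exp_sum]
  push_cast
  rw [sum_mul, sum_mul]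
  exact congrArg exp (sum_congr rfl fun x _ => by ring)

lemma mul_eq_mul_of_prod_zpow_eq_one {n : ℕ} (a : Fin n → ℕ) (c : Fin n → ℤ)
    (hc : ∀ l, memH a l → ∏ x, l x ^ c x = 1) (j k : Fin n) :
    (a k : ℤ) * c j = a j * c k := by
  by_contra hne
  set e : Fin n → ℤ := Pi.single j (a k : ℤ) - Pi.single k (a j : ℤ)
  have he : ∀ w : Fin n → ℤ, ∑ x, e x * w x = a k * w j - a j * w k := by
    simp [e, sub_mul, sum_sub_distrib, Pi.single_apply]
  set d := (a k : ℤ) * c j - a j * c k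
  have hd : (d : ℝ) ≠ 0 := by exact_mod_cast sub_ne_zero.mpr hne
  -- on the circle `t ↦ exp (i t e)` in `H` the character `c` is `exp (i t d)`; take `t = π / d`
  have hmem : memH a fun x => exp (↑(e x * (Real.pi / d)) * I) := by
    refine ⟨fun x => norm_exp_ofReal_mul_I _, ?_⟩
    simpa only [zpow_natCast, he, mul_comm (a k : ℤ), sub_self, Int.cast_zero, zero_mul,
      ofReal_zero, exp_zero] using prod_exp_mul_I_zpow e (fun x => a x) (Real.pi / d)
  have h := hc _ hmem
  rw [prod_exp_mul_I_zpow, he, mul_div_cancel₀ _ hd, exp_pi_mul_I] at h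
  norm_num at h

-- the exponents of the character `l ↦ χₐ (g diag(l) g⁻¹)`, with `χₐ l = ∏ i, l i ^ a i`
noncomputable def twistedExponent {ι : Type*} (a : ι → ℕ) (σ : Equiv.Perm ι) (S : Set ι)
    (j : ι) : ℤ :=
  if j ∈ S then -(a (σ.symm j) : ℤ) else a (σ.symm j)

lemma natAbs_twistedExponent {ι : Type*} (a : ι → ℕ) (σ : Equiv.Perm ι) (S : Set ι) (j : ι) :
    (twistedExponent a σ S j).natAbs = a (σ.symm j) := by
  unfold twistedExponent; split_ifs <;> simp

lemma twistedExponent_neg_iff {ι : Type*} {a : ι → ℕ} (ha : ∀ i, 0 < a i) (σ : Equiv.Perm ι)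
    (S : Set ι) (j : ι) : twistedExponent a σ S j < 0 ↔ j ∈ S := by
  have := ha (σ.symm j)
  unfold twistedExponent; split_ifs with hj <;> simp [hj, this]

section Normalizer

variable {n : ℕ} {a : Fin n → ℕ} {σ : Equiv.Perm (Fin n)} {S : Set (Fin n)} {ν : Fin n → ℂ}
  {g : (Fin n → ℂ) → (Fin n → ℂ)}

lemma apply_eq_ite_of_comp_Dop (hν : ∀ i, ‖ν i‖ = 1)
    (hg : ∀ z i, g z i = if σ i ∈ S then (starRingEnd ℂ) (ν (σ i) * z (σ i))
      else ν (σ i) * z (σ i))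
    {l m : Fin n → ℂ} (hl : ∀ i, ‖l i‖ = 1) (h : ∀ z, g (Dop l z) = Dop m (g z)) (i : Fin n) :
    m i = if σ i ∈ S then (l (σ i))⁻¹ else l (σ i) := by
  have hν0 : ν (σ i) ≠ 0 := norm_ne_zero_iff.mp (by simp [hν])
  have hi := congrFun (h 1) i
  simp only [Dop, hg, Pi.one_apply, mul_one] at hi
  split_ifs at hi ⊢
  · rw [map_mul, mul_comm (m i)] at hi
    rw [Complex.inv_eq_conj (hl _)]
    exact (mul_left_cancel₀ (by simpa using hν0) hi).symm
  · rw [mul_comm (m i)] at hi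
    exact (mul_left_cancel₀ hν0 hi).symm

lemma prod_zpow_twistedExponent_eq_one (hν : ∀ i, ‖ν i‖ = 1)
    (hg : ∀ z i, g z i = if σ i ∈ S then (starRingEnd ℂ) (ν (σ i) * z (σ i))
      else ν (σ i) * z (σ i))
    (hnorm : ∀ l, memH a l → ∃ m, memH a m ∧ ∀ z, g (Dop l z) = Dop m (g z))
    {l : Fin n → ℂ} (hl : memH a l) : ∏ x, l x ^ twistedExponent a σ S x = 1 := by
  obtain ⟨m, hm, hlm⟩ := hnorm l hl
  have hpow : ∀ i, l (σ i) ^ twistedExponent a σ S (σ i) = m i ^ a i := by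
    intro i
    rw [apply_eq_ite_of_comp_Dop hν hg hl.1 hlm i, twistedExponent]
    split_ifs <;> simp
  rw [← Equiv.prod_comp σ, Finset.prod_congr rfl fun i _ => hpow i, hm.2]

end Normalizer

lemma eq_of_mul_eq_mul_of_sum_eq {ι : Type*} [Fintype ι] {a b : ι → ℕ} (ha : ∀ i, 0 < a i)
    (hsum : ∑ i, b i = ∑ i, a i) (h : ∀ j k, a k * b j = a j * b k) : b = a := by
  funext j
  have hpos : 0 < ∑ i, a i := (ha j).trans_le (single_le_sum (fun i _ => (ha i).le) (mem_univ j))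
  refine Nat.eq_of_mul_eq_mul_right hpos ?_
  calc b j * ∑ i, a i = a j * ∑ i, b i := by
        rw [mul_sum, mul_sum]; exact sum_congr rfl fun k _ => by rw [mul_comm, h]
    _ = a j * ∑ i, a i := by rw [hsum]

lemma neg_iff_neg_of_mul_eq_mul {a b c d : ℤ} (ha : 0 < a) (hb : 0 < b) (h : a * c = b * d) :
    c < 0 ↔ d < 0 := by
  simp only [← not_le]
  rw [← mul_nonneg_iff_of_pos_left ha, h, mul_nonneg_iff_of_pos_left hb]

theorem stmt_14_general {n : ℕ} (a : Fin n → ℕ) (ha : ∀ i, 0 < a i)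
    (σ : Equiv.Perm (Fin n)) (S : Set (Fin n)) (ν : Fin n → ℂ) (hν : ∀ i, ‖ν i‖ = 1)
    (g : (Fin n → ℂ) → (Fin n → ℂ))
    (hg : ∀ z i, g z i = if σ i ∈ S then (starRingEnd ℂ) (ν (σ i) * z (σ i))
      else ν (σ i) * z (σ i))
    (hnorm : ∀ l, memH a l → ∃ m, memH a m ∧ ∀ z, g (Dop l z) = Dop m (g z)) :
    (∀ i, a (σ i) = a i) ∧ (S = ∅ ∨ S = Set.univ) := by
  set c := twistedExponent a σ S
  have hprop := mul_eq_mul_of_prod_zpow_eq_one a c fun l hl =>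
    prod_zpow_twistedExponent_eq_one hν hg hnorm hl
  constructor
  · have hperm : a ∘ σ.symm = a := by
      refine eq_of_mul_eq_mul_of_sum_eq ha (σ.symm.sum_comp a) fun j k => ?_
      simpa [Int.natAbs_mul, c, natAbs_twistedExponent] using congrArg Int.natAbs (hprop j k)
    intro i
    simpa using (congrFun hperm (σ i)).symm
  · rcases S.eq_empty_or_nonempty with hS | ⟨j, hj⟩
    · exact Or.inl hS
    · refine Or.inr (Set.eq_univ_of_forall fun k => ?_)
      have hsign := neg_iff_neg_of_mul_eq_mul (by exact_mod_cast ha k) (by exact_mod_cast ha j)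
        (hprop j k)
      simpa only [c, twistedExponent_neg_iff ha] using hsign.mp
        ((twistedExponent_neg_iff ha σ S j).mpr hj)

/-- Suppose the coordinate representations of `H` are pairwise non-isomorphic over `ℝ`,
and `g = g₁ ∘ g₂ ∘ g₃` normalizes `H`, where `g₁` permutes coordinates by `σ`, `g₂`
conjugates the coordinates in a set `S`, and `g₃` multiplies coordinate `i` by a unit
complex number `ν i`. Then `a (σ i) = a i` for all `i`, and `g₂` is the identity or
conjugates all coordinates. -/
theorem stmt_14 {n : ℕ} (hn : 2 ≤ n) (a : Fin n → ℕ) (ha : ∀ i, 0 < a i)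
    (hiso : ∀ i j : Fin n, i ≠ j →
      (∃ l, memH a l ∧ l i ≠ l j) ∧ (∃ l, memH a l ∧ l i * l j ≠ 1))
    (σ : Equiv.Perm (Fin n)) (S : Set (Fin n)) (ν : Fin n → ℂ) (hν : ∀ i, ‖ν i‖ = 1)
    (g : (Fin n → ℂ) → (Fin n → ℂ))
    (hg : ∀ z i, g z i = if σ i ∈ S then (starRingEnd ℂ) (ν (σ i) * z (σ i))
      else ν (σ i) * z (σ i))
    (hnorm : ∀ l, memH a l → ∃ m, memH a m ∧ ∀ z, g (Dop l z) = Dop m (g z))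
    (hnorm' : ∀ m, memH a m → ∃ l, memH a l ∧ ∀ z, g (Dop l z) = Dop m (g z)) :
    (∀ i, a (σ i) = a i) ∧ (S = ∅ ∨ S = Set.univ) :=
  stmt_14_general a ha σ S ν hν g hg hnorm
end

section
/- Let H ⊆ GL(V) be the group of right multiplications by unit complex numbers on V = ℍ (the quaternions, viewed as a 2-dimensional complex vector space via left multiplication by i). Then the map π: ℍ → ℍ, v ↦ v i v̄ (quaternionic conjugation) has image equal to the purely imaginary quaternions ⟨i, j, k⟩ ≅ ℝ³, and π(v₁) = π(v₂) if and only if v₁ = v₂ z for some complex number z with |z| = 1. Consequently the orbit space V/H is homeomorphic to ℝ³. -/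
/-!
Every value `π v = v i v̄` is purely imaginary, and a nonzero imaginary `q` is hit because some
`w ≠ 0` satisfies `w i = ‖q‖⁻¹ q w`, making `π w` a positive multiple of `q`; rescale, `π` being
quadratic. For `v₂ ≠ 0` write `v₁ = v₂ z`: then `π v₁ = v₂ (π z) v̄₂`, so `π v₁ = π v₂` iff
`π z = i`, i.e. `z` is a unit quaternion commuting with `i`, a unit complex number. Since
`‖π v‖ = ‖v‖²`, `π` is proper, hence a quotient map onto `ℝ³`, whose kernel is the orbit relation.
-/

/-- The quaternion `i`. -/
def qi : Quaternion ℝ := ⟨0, 1, 0, 0⟩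

/-- The Hopf-type map `v ↦ v i v̄` on the quaternions. -/
noncomputable def hopf (v : Quaternion ℝ) : Quaternion ℝ := v * qi * star v

open Quaternion

namespace Quaternion

theorem normSq_eq_one_iff {z : ℍ[ℝ]} : normSq z = 1 ↔ ‖z‖ = 1 := by
  rw [normSq_eq_norm_mul_self, ← sq, pow_eq_one_iff_of_nonneg (norm_nonneg z) two_ne_zero]

theorem mul_self_eq_neg_norm_sq {q : ℍ[ℝ]} (hq : q.re = 0) : q * q = -(‖q‖ ^ 2 : ℝ) := by
  rw [← sq, sq_eq_neg_normSq.2 hq, normSq_eq_norm_mul_self, sq]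

theorem mul_mul_star_of_mul_eq {R : Type*} [CommRing R] {w a p : ℍ[R]} (h : w * a = p * w) :
    w * a * star w = normSq w • p := by
  rw [h, mul_assoc, self_mul_star, mul_coe_eq_smul]

theorem mul_mul_star_eq_normSq_smul_iff {R : Type*} [CommRing R] [LinearOrder R]
    [IsStrictOrderedRing R] {z a : ℍ[R]} :
    z * a * star z = normSq z • a ↔ Commute z a := by
  refine ⟨fun h => ?_, fun h => mul_mul_star_of_mul_eq h.eq⟩
  obtain rfl | hz := eq_or_ne z 0
  · exact Commute.zero_left a
  have h' : z * a * star z = a * z * star z := by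
    rw [mul_assoc a, self_mul_star, mul_coe_eq_smul]
    exact h
  exact mul_right_cancel₀ (star_ne_zero.2 hz) h'

end Quaternion

@[simp] lemma qi_re : qi.re = 0 := rfl
@[simp] lemma qi_imI : qi.imI = 1 := rfl
@[simp] lemma qi_imJ : qi.imJ = 0 := rfl
@[simp] lemma qi_imK : qi.imK = 0 := rfl

lemma star_qi : star qi = -qi := star_eq_neg.2 rfl

lemma qi_mul_qi : qi * qi = -1 := by ext <;> simp

lemma normSq_qi : normSq qi = 1 := by simp [normSq_def']

def qj : ℍ[ℝ] := ⟨0, 0, 1, 0⟩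

@[simp] lemma qj_re : qj.re = 0 := rfl
@[simp] lemma qj_imI : qj.imI = 0 := rfl
@[simp] lemma qj_imJ : qj.imJ = 1 := rfl
@[simp] lemma qj_imK : qj.imK = 0 := rfl

lemma commute_qi_iff {z : ℍ[ℝ]} : Commute z qi ↔ z.imJ = 0 ∧ z.imK = 0 := by
  simp only [Commute, SemiconjBy, Quaternion.ext_iff, re_mul, imI_mul, imJ_mul, imK_mul,
    qi_re, qi_imI, qi_imJ, qi_imK]
  constructor
  · rintro ⟨-, -, h, h'⟩
    constructor <;> linarith
  · rintro ⟨h, h'⟩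
    simp [h, h']

lemma hopf_re (v : ℍ[ℝ]) : (hopf v).re = 0 :=
  star_eq_neg.1 (by simp only [hopf, star_mul, star_star, star_qi, mul_neg, neg_mul, mul_assoc])

lemma normSq_hopf (v : ℍ[ℝ]) : normSq (hopf v) = normSq v ^ 2 := by
  simp [hopf, normSq_qi, sq]

lemma norm_hopf (v : ℍ[ℝ]) : ‖hopf v‖ = ‖v‖ ^ 2 := by
  rw [hopf, norm_mul, norm_mul, norm_star, normSq_eq_one_iff.1 normSq_qi, mul_one, sq]

lemma hopf_smul (c : ℝ) (v : ℍ[ℝ]) : hopf (c • v) = c ^ 2 • hopf v := by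
  simp [hopf, smul_smul, sq]

lemma hopf_mul (v z : ℍ[ℝ]) : hopf (v * z) = v * hopf z * star v := by
  simp only [hopf, star_mul, mul_assoc]

/- With `r = ‖q‖` and `q² = -r²`, the quaternion `w = r - q i` satisfies `w i = r i + q = r⁻¹ q w`;
it vanishes only for `q = -r i`, where `w = j` works instead. -/
lemma exists_mul_qi_eq {q : ℍ[ℝ]} (hq : q.re = 0) (hq0 : q ≠ 0) :
    ∃ w ≠ 0, w * qi = (‖q‖⁻¹ • q) * w := by
  have hqq := mul_self_eq_neg_norm_sq hq
  set r := ‖q‖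
  have hr : r ≠ 0 := norm_ne_zero_iff.2 hq0
  clear_value r
  by_cases hdeg : q = -(r • qi)
  · refine ⟨qj, fun h => by simpa using congrArg QuaternionAlgebra.imJ h, ?_⟩
    rw [hdeg, smul_neg, smul_smul, inv_mul_cancel₀ hr, one_smul]
    ext <;> simp [re_mul, imI_mul, imJ_mul, imK_mul]
  refine ⟨(r : ℍ[ℝ]) - q * qi, fun h => hdeg ?_, ?_⟩
  · calc q = -(q * qi * qi) := by rw [mul_assoc, qi_mul_qi, mul_neg_one, neg_neg]
      _ = -(r • qi) := by rw [← sub_eq_zero.1 h, coe_mul_eq_smul]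
  · rw [mul_sub, smul_mul_assoc, smul_mul_assoc, ← mul_assoc q q, hqq,
      sub_mul, mul_assoc, qi_mul_qi]
    simp only [coe_mul_eq_smul, mul_coe_eq_smul, neg_mul, smul_neg, smul_smul, mul_neg_one,
      sub_neg_eq_add, inv_mul_cancel₀ hr, sq, ← mul_assoc, one_mul, one_smul]
    abel

lemma exists_hopf_eq {q : ℍ[ℝ]} (hq : q.re = 0) : ∃ v, hopf v = q := by
  obtain rfl | hq0 := eq_or_ne q 0
  · exact ⟨0, by simp [hopf]⟩
  obtain ⟨w, hw0, hw⟩ := exists_mul_qi_eq hq hq0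
  have hnw : normSq w ≠ 0 := normSq_ne_zero.2 hw0
  have hnq : ‖q‖ ≠ 0 := norm_ne_zero_iff.2 hq0
  refine ⟨√(‖q‖ / normSq w) • w, ?_⟩
  rw [hopf_smul, Real.sq_sqrt (div_nonneg (norm_nonneg q) normSq_nonneg), hopf,
    mul_mul_star_of_mul_eq hw, smul_smul, smul_smul, div_mul_cancel₀ _ hnw,
    mul_inv_cancel₀ hnq, one_smul]

lemma range_hopf : Set.range hopf = {q | q.re = 0} :=
  Set.Subset.antisymm (Set.range_subset_iff.2 hopf_re) fun _ => exists_hopf_eq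

lemma hopf_eq_qi_iff {z : ℍ[ℝ]} : hopf z = qi ↔ Commute z qi ∧ normSq z = 1 := by
  refine ⟨fun h => ?_, fun ⟨hc, hz⟩ => by rw [hopf, mul_mul_star_of_mul_eq hc.eq, hz, one_smul]⟩
  have hz : normSq z = 1 := by
    rw [← pow_eq_one_iff_of_nonneg normSq_nonneg two_ne_zero, ← normSq_hopf, h, normSq_qi]
  refine ⟨?_, hz⟩
  rw [← mul_mul_star_eq_normSq_smul_iff, hz, one_smul]
  exact h

lemma hopf_eq_hopf_iff {v₁ v₂ : ℍ[ℝ]} :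
    hopf v₁ = hopf v₂ ↔ ∃ z, hopf z = qi ∧ v₁ = v₂ * z := by
  constructor
  · intro h
    obtain rfl | hv₂ := eq_or_ne v₂ 0
    · refine ⟨1, by simp [hopf], ?_⟩
      have : normSq v₁ ^ 2 = 0 := by rw [← normSq_hopf, h]; simp [hopf]
      simpa using this
    have hv₁ : v₁ = v₂ * (v₂⁻¹ * v₁) := by rw [← mul_assoc, mul_inv_cancel₀ hv₂, one_mul]
    refine ⟨v₂⁻¹ * v₁, ?_, hv₁⟩
    rw [hv₁, hopf_mul, hopf] at h
    exact mul_left_cancel₀ hv₂ (mul_right_cancel₀ (star_ne_zero.2 hv₂) h)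
  · rintro ⟨z, hz, rfl⟩
    rw [hopf_mul, hz, hopf]

def imVec (q : ℍ[ℝ]) : EuclideanSpace ℝ (Fin 3) := !₂[q.imI, q.imJ, q.imK]

lemma continuous_imVec : Continuous imVec :=
  (PiLp.continuous_toLp 2 _).comp <| continuous_pi fun i => by
    fin_cases i <;> [exact continuous_imI; exact continuous_imJ; exact continuous_imK]

lemma norm_imVec_of_re_eq_zero {q : ℍ[ℝ]} (hq : q.re = 0) : ‖imVec q‖ = ‖q‖ := by
  rw [← sq_eq_sq₀ (norm_nonneg _) (norm_nonneg _), EuclideanSpace.norm_sq_eq, sq,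
    ← normSq_eq_norm_mul_self, normSq_def', hq]
  simp [imVec, Fin.sum_univ_three]

lemma imVec_injOn : Set.InjOn imVec {q | q.re = 0} := by
  intro p hp q hq h
  have h' : ∀ i, imVec p i = imVec q i := fun i => by rw [h]
  ext
  · rw [hp, hq]
  · exact h' 0
  · exact h' 1
  · exact h' 2

lemma ker_imVec_comp_hopf : Setoid.ker (imVec ∘ hopf) = Setoid.ker hopf :=
  Setoid.ext fun v w => imVec_injOn.eq_iff (hopf_re v) (hopf_re w)

lemma continuous_hopf : Continuous hopf := by
  unfold hopf
  fun_prop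

lemma isProperMap_imVec_comp_hopf : IsProperMap (imVec ∘ hopf) := by
  refine isProperMap_iff_tendsto_cocompact.2
    ⟨continuous_imVec.comp continuous_hopf, tendsto_cocompact_of_tendsto_dist_comp_atTop 0 ?_⟩
  simp only [Function.comp_apply, dist_zero_right, norm_imVec_of_re_eq_zero (hopf_re _),
    norm_hopf]
  exact (Filter.tendsto_pow_atTop two_ne_zero).comp tendsto_norm_cocompact_atTop

lemma surjective_imVec_comp_hopf : Function.Surjective (imVec ∘ hopf) := by
  intro y
  obtain ⟨v, hv⟩ := exists_hopf_eq (q := ⟨0, y 0, y 1, y 2⟩) rfl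
  refine ⟨v, ?_⟩
  ext i
  fin_cases i <;> simp [imVec, hv]

lemma isQuotientMap_imVec_comp_hopf : Topology.IsQuotientMap (imVec ∘ hopf) :=
  isProperMap_imVec_comp_hopf.isClosedMap.isQuotientMap isProperMap_imVec_comp_hopf.continuous
    surjective_imVec_comp_hopf

/-- For the group `H` of right multiplications by unit complex numbers on `ℍ`
(viewed as a `2`-dimensional complex space), the map `π(v) = v i v̄` has image the purely
imaginary quaternions `⟨i, j, k⟩ ≅ ℝ³`, and `π v₁ = π v₂` iff `v₁ = v₂ z` for some
complex `z` with `|z| = 1`. Consequently the orbit space `ℍ/H` is homeomorphic to `ℝ³`. -/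
theorem stmt_15 :
    (Set.range hopf = {q : Quaternion ℝ | q.re = 0}) ∧
    (∀ v₁ v₂ : Quaternion ℝ, hopf v₁ = hopf v₂ ↔
      ∃ z : Quaternion ℝ, z.imJ = 0 ∧ z.imK = 0 ∧ ‖z‖ = 1 ∧ v₁ = v₂ * z) ∧
    Nonempty ((Quotient (Setoid.ker hopf)) ≃ₜ EuclideanSpace ℝ (Fin 3)) := by
  refine ⟨range_hopf, fun v₁ v₂ => ?_, ?_⟩
  · simp_rw [hopf_eq_hopf_iff, hopf_eq_qi_iff, commute_qi_iff, normSq_eq_one_iff, and_assoc]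
  · rw [← ker_imVec_comp_hopf]
    exact ⟨Topology.IsQuotientMap.homeomorph (f := ⟨_, isProperMap_imVec_comp_hopf.continuous⟩)
      isQuotientMap_imVec_comp_hopf⟩
end
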